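/- Under the hypotheses of the noisy ℓ¹ minimization problem, if IC(x⁰) < 1, then any solution x⋆ of min ‖x‖₁ subject to ‖Ax − y‖₂ ≤ ε satisfies ‖x⋆_{I^c}‖₁ ≤ 2ε‖d(x⁰)‖₂ / (1 − IC(x⁰)). -/

import Mathlib

open Finset Matrix

/-- ℓ¹ norm of a finitely-indexed real vector. -/
noncomputable def l1 {ι : Type*} [Fintype ι] (x : ι → ℝ) : ℝ := ∑ i, |x i|

/-- ℓ² (Euclidean) norm. -/
noncomputable def l2 {ι : Type*} [Fintype ι] (x : ι → ℝ) : ℝ := Real.sqrt (∑ i, (x i) ^ 2)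

/-- ℓ^∞ norm. -/
noncomputable def linf {ι : Type*} [Fintype ι] (x : ι → ℝ) : ℝ := sSup {y | ∃ i, y = |x i|}

/-- Operator norm induced by the Euclidean norms (spectral norm). -/
noncomputable def opNorm2 {ι κ : Type*} [Fintype ι] [Fintype κ] (M : Matrix ι κ ℝ) : ℝ :=
  sSup {y | ∃ x : κ → ℝ, l2 x ≤ 1 ∧ y = l2 (M.mulVec x)}

/-- Operator norm from ℓ¹ to ℓ². -/
noncomputable def norm12 {ι κ : Type*} [Fintype ι] [Fintype κ] (M : Matrix ι κ ℝ) : ℝ :=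
  sSup {y | ∃ x : κ → ℝ, x ≠ 0 ∧ y = l2 (M.mulVec x) / l1 x}

/-- Submatrix of the columns of `A` indexed by `I`. -/
def colSub {n m : ℕ} (A : Matrix (Fin n) (Fin m) ℝ) (I : Finset (Fin m)) :
    Matrix (Fin n) {j // j ∈ I} ℝ := fun i j => A i j

/-- The Gram matrix `A_Iᵗ A_I`. -/
def gram {n m : ℕ} (A : Matrix (Fin n) (Fin m) ℝ) (I : Finset (Fin m)) :
    Matrix {j // j ∈ I} {j // j ∈ I} ℝ := (colSub A I)ᵀ * colSub A I

/-- The sign vector of `x` restricted to `I`. -/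
noncomputable def signI {m : ℕ} (x : Fin m → ℝ) (I : Finset (Fin m)) : {j // j ∈ I} → ℝ :=
  fun j => Real.sign (x j)

/-- The vector `d(x) = A_I (A_IᵗA_I)⁻¹ sign(x_I)`. -/
noncomputable def dvec {n m : ℕ} (A : Matrix (Fin n) (Fin m) ℝ) (I : Finset (Fin m))
    (x : Fin m → ℝ) : Fin n → ℝ :=
  (colSub A I).mulVec ((gram A I)⁻¹.mulVec (signI x I))

/-- The identification coefficient `IC(x) = max_{j ∉ I} |a_jᵗ d(x)|`. -/
noncomputable def IC {n m : ℕ} (A : Matrix (Fin n) (Fin m) ℝ) (I : Finset (Fin m))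
    (x : Fin m → ℝ) : ℝ :=
  sSup {y | ∃ j ∉ I, y = |∑ i, A i j * dvec A I x i|}

/-- Restriction of `x` to `I`, extended by zero. -/
def restr {m : ℕ} (I : Finset (Fin m)) (x : Fin m → ℝ) : Fin m → ℝ :=
  fun i => if i ∈ I then x i else 0

/-!
The vector `c = Aᵗ d(x⁰)` is a dual certificate: it equals `sign x⁰` on `I` and is bounded by
`IC(x⁰)` off `I`. Hence `⟨c, x⁰⟩ = ‖x⁰‖₁` while `⟨c, x⟩ + (1 - IC) ‖x_{Iᶜ}‖₁ ≤ ‖x‖₁` for every `x`.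
Since `x⁰` is feasible, `‖x⋆‖₁ ≤ ‖x⁰‖₁`, so `(1 - IC) ‖x⋆_{Iᶜ}‖₁ ≤ ⟨c, x⁰ - x⋆⟩ = ⟨d, A x⁰ - A x⋆⟩`,
and by Cauchy–Schwarz the latter is at most `‖d‖₂ (‖Ax⁰ - y‖₂ + ‖Ax⋆ - y‖₂) ≤ 2ε ‖d‖₂`.
-/

lemma Real.sign_mul_self (x : ℝ) : Real.sign x * x = |x| := by
  rcases lt_trichotomy x 0 with h | rfl | h
  · rw [Real.sign_of_neg h, abs_of_neg h]; ring
  · simp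
  · rw [Real.sign_of_pos h, abs_of_pos h]; ring

lemma Real.abs_sign_le_one (x : ℝ) : |Real.sign x| ≤ 1 := by
  rcases Real.sign_apply_eq x with h | h | h <;> simp [h]

section L2

variable {ι : Type*} [Fintype ι]

lemma l2_eq_norm_toLp (x : ι → ℝ) : l2 x = ‖WithLp.toLp 2 x‖ := by
  simp [l2, EuclideanSpace.norm_eq, sq_abs]

lemma dotProduct_le_l2_mul_l2 (u v : ι → ℝ) : u ⬝ᵥ v ≤ l2 u * l2 v := by
  rw [l2_eq_norm_toLp, l2_eq_norm_toLp]
  simpa [PiLp.inner_apply, dotProduct, mul_comm] using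
    real_inner_le_norm (WithLp.toLp 2 u) (WithLp.toLp 2 v)

lemma l2_sub_le (u v : ι → ℝ) : l2 (u - v) ≤ l2 u + l2 v := by
  simpa only [l2_eq_norm_toLp, WithLp.toLp_sub] using norm_sub_le _ _

lemma l2_neg (u : ι → ℝ) : l2 (-u) = l2 u := by
  simp only [l2_eq_norm_toLp, WithLp.toLp_neg, norm_neg]

lemma transpose_mulVec_dotProduct_sub_le {κ : Type*} [Fintype κ] (A : Matrix ι κ ℝ)
    (d y : ι → ℝ) {u v : κ → ℝ} {ε : ℝ} (hu : l2 (A *ᵥ u - y) ≤ ε)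
    (hv : l2 (A *ᵥ v - y) ≤ ε) : (Aᵀ *ᵥ d) ⬝ᵥ (u - v) ≤ 2 * ε * l2 d := by
  have hd : 0 ≤ l2 d := Real.sqrt_nonneg _
  have hsplit : A *ᵥ (u - v) = (A *ᵥ u - y) - (A *ᵥ v - y) := by
    rw [mulVec_sub]; abel
  calc (Aᵀ *ᵥ d) ⬝ᵥ (u - v) = d ⬝ᵥ (A *ᵥ (u - v)) := by
        rw [mulVec_transpose, dotProduct_mulVec]
    _ ≤ l2 d * l2 (A *ᵥ (u - v)) := dotProduct_le_l2_mul_l2 _ _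
    _ ≤ l2 d * (ε + ε) := by
        rw [hsplit]
        exact mul_le_mul_of_nonneg_left ((l2_sub_le _ _).trans (add_le_add hu hv)) hd
    _ = 2 * ε * l2 d := by ring

end L2

lemma dotProduct_eq_l1_of_eq_sign {ι : Type*} [Fintype ι] {c x : ι → ℝ}
    (h : ∀ j, x j ≠ 0 → c j = Real.sign (x j)) : c ⬝ᵥ x = l1 x := by
  refine Finset.sum_congr rfl fun j _ => ?_
  by_cases hj : x j = 0
  · simp [hj]
  · rw [h j hj, Real.sign_mul_self]

lemma dotProduct_add_l1_restr_compl_le {m : ℕ} {c : Fin m → ℝ} {s : Finset (Fin m)} {κ : ℝ}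
    (h_on : ∀ j ∈ s, |c j| ≤ 1) (h_off : ∀ j ∉ s, |c j| ≤ κ) (x : Fin m → ℝ) :
    c ⬝ᵥ x + (1 - κ) * l1 (restr sᶜ x) ≤ l1 x := by
  rw [dotProduct, l1, l1, Finset.mul_sum, ← Finset.sum_add_distrib]
  refine Finset.sum_le_sum fun j _ => ?_
  have hcx : c j * x j ≤ |c j| * |x j| := abs_mul (c j) (x j) ▸ le_abs_self _
  have hx := abs_nonneg (x j)
  by_cases hj : j ∈ s
  · simp only [restr, Finset.mem_compl, hj, not_true_eq_false, if_false, abs_zero, mul_zero,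
      add_zero]
    nlinarith [h_on j hj]
  · simp only [restr, Finset.mem_compl, hj, not_false_eq_true, if_true]
    nlinarith [h_off j hj]

section Certificate

variable {n m : ℕ} (A : Matrix (Fin n) (Fin m) ℝ) (I : Finset (Fin m)) (x : Fin m → ℝ)

lemma colSub_transpose_mulVec_dvec (hinv : IsUnit (gram A I).det) :
    (colSub A I)ᵀ *ᵥ dvec A I x = signI x I := by
  rw [dvec, mulVec_mulVec, mulVec_mulVec, ← _root_.gram, mul_nonsing_inv _ hinv, one_mulVec]

lemma transpose_mulVec_dvec_of_mem (hinv : IsUnit (gram A I).det) {j : Fin m} (hj : j ∈ I) :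
    (Aᵀ *ᵥ dvec A I x) j = Real.sign (x j) :=
  congrFun (colSub_transpose_mulVec_dvec A I x hinv) ⟨j, hj⟩

lemma abs_transpose_mulVec_dvec_le_IC {j : Fin m} (hj : j ∉ I) :
    |(Aᵀ *ᵥ dvec A I x) j| ≤ IC A I x := by
  have hbdd : BddAbove {y | ∃ j ∉ I, y = |∑ i, A i j * dvec A I x i|} :=
    (Set.finite_range fun j => |∑ i, A i j * dvec A I x i|).bddAbove.mono <| by
      rintro _ ⟨j, -, rfl⟩
      exact ⟨j, rfl⟩
  exact le_csSup hbdd ⟨j, hj, rfl⟩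

end Certificate

theorem off_support_l1_bound_general {n m : ℕ} (A : Matrix (Fin n) (Fin m) ℝ)
    (x0 xs : Fin m → ℝ) (b y : Fin n → ℝ) (ε : ℝ)
    (I : Finset (Fin m)) (hI : ∀ i, i ∈ I ↔ x0 i ≠ 0)
    (hinv : IsUnit (gram A I).det) (hIC : IC A I x0 < 1)
    (hy : y = A.mulVec x0 + b) (hb : l2 b ≤ ε)
    (hfeas : l2 (A.mulVec xs - y) ≤ ε)
    (hmin : ∀ x : Fin m → ℝ, l2 (A.mulVec x - y) ≤ ε → l1 xs ≤ l1 x) :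
    l1 (restr Iᶜ xs) ≤ 2 * ε * l2 (dvec A I x0) / (1 - IC A I x0) := by
  set c := Aᵀ *ᵥ dvec A I x0
  have hc_on : ∀ j ∈ I, c j = Real.sign (x0 j) := fun j hj =>
    transpose_mulVec_dvec_of_mem A I x0 hinv hj
  have hx0_feas : l2 (A *ᵥ x0 - y) ≤ ε := by
    rwa [hy, sub_add_cancel_left, l2_neg]
  have hlower := dotProduct_add_l1_restr_compl_le
    (fun j hj => (congrArg abs (hc_on j hj)).trans_le (Real.abs_sign_le_one _))
    (fun j hj => abs_transpose_mulVec_dvec_le_IC A I x0 hj) xs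
  have hx0 : c ⬝ᵥ x0 = l1 x0 :=
    dotProduct_eq_l1_of_eq_sign fun j hj => hc_on j ((hI j).mpr hj)
  have hcorr := transpose_mulVec_dotProduct_sub_le A (dvec A I x0) y hx0_feas hfeas
  rw [dotProduct_sub] at hcorr
  rw [le_div_iff₀ (sub_pos.mpr hIC)]
  linarith [hmin x0 hx0_feas]

/-- any ℓ¹ minimizer satisfies `‖x⋆_{I^c}‖₁ ≤ 2ε‖d(x⁰)‖₂/(1 − IC(x⁰))`. -/
theorem off_support_l1_bound {n m : ℕ} (A : Matrix (Fin n) (Fin m) ℝ)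
    (x0 xs : Fin m → ℝ) (b y : Fin n → ℝ) (ε : ℝ)
    (I : Finset (Fin m)) (hI : ∀ i, i ∈ I ↔ x0 i ≠ 0)
    (hcols : ∀ j, l2 (fun i => A i j) = 1)
    (hinv : IsUnit (gram A I).det) (hIC : IC A I x0 < 1)
    (hy : y = A.mulVec x0 + b) (hb : l2 b ≤ ε)
    (hfeas : l2 (A.mulVec xs - y) ≤ ε)
    (hmin : ∀ x : Fin m → ℝ, l2 (A.mulVec x - y) ≤ ε → l1 xs ≤ l1 x) :
    l1 (restr Iᶜ xs) ≤ 2 * ε * l2 (dvec A I x0) / (1 - IC A I x0) :=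
  off_support_l1_bound_general A x0 xs b y ε I hI hinv hIC hy hb hfeas hmin
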